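/- arXiv:math/0506310 — 3 statements merged into one kernel-verified Lean document; each statement's English description precedes it below -/
import Mathlib

section
/- In the free monoidal category generated by a type C (the monoidal category whose objects are formal tensor expressions built from generators of C and the unit, and whose morphisms are generated by the associators, unitors, tensoring and composition, subject to the monoidal category axioms), any two parallel morphisms are equal; that is, for all objects X and Y of the free monoidal category over C, the hom-set X ⟶ Y is a subsingleton. In other words, the free monoidal category generated by a discrete category is a preorder: all diagrams built from structural morphisms commute. -/
open CategoryTheory

/-- Mac Lane's coherence theorem: in the free monoidal category generated by a
type `C`, any two parallel morphisms are equal, i.e. the category is a preorder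
("all diagrams commute"). -/
theorem free_monoidal_category_hom_subsingleton (C : Type u)
    (X Y : FreeMonoidalCategory C) : Subsingleton (X ⟶ Y) := by
  infer_instance
end

section
/- Let C be a type and let X and Y be objects of the free monoidal category generated by C. Then there exists a morphism from X to Y (equivalently, an isomorphism between X and Y) if and only if X and Y have the same normal form, i.e., the lists of generators of C obtained by flattening X and Y (erasing the unit object and all parenthesization by the tensor) are equal. -/
open CategoryTheory

/-- The normal form of an object of the free monoidal category: the list of
generators obtained by flattening the tensor expression and erasing the unit. -/
def FreeMonoidalCategory.flatten {C : Type u} : FreeMonoidalCategory C → List C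
  | .of X => [X]
  | .unit => []
  | .tensor X Y => FreeMonoidalCategory.flatten X ++ FreeMonoidalCategory.flatten Y

namespace CategoryTheory.FreeMonoidalCategory

/-- Turn a normal monoidal object into a list of generators. -/
def nmoToList {C : Type u} : NormalMonoidalObject C → List C
  | .unit => []
  | .tensor n a => nmoToList n ++ [a]

theorem nmoToList_injective {C : Type u} : Function.Injective (nmoToList (C := C)) := by
  intro m n h
  induction m generalizing n with
  | unit => cases n with
    | unit => rfl
    | tensor n a => simp [nmoToList] at h
  | tensor m a ih => cases n with
    | unit => simp [nmoToList] at h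
    | tensor n b =>
      simp only [nmoToList] at h
      obtain ⟨h1, h2⟩ := List.append_inj' h rfl
      simp only [List.cons.injEq] at h2
      rw [ih h1, h2.1]

theorem nmoToList_normalizeObj {C : Type u} (X : FreeMonoidalCategory C)
    (n : NormalMonoidalObject C) :
    nmoToList (normalizeObj X n) = nmoToList n ++ _root_.FreeMonoidalCategory.flatten X := by
  induction X generalizing n with
  | of a => simp [normalizeObj, nmoToList, _root_.FreeMonoidalCategory.flatten]
  | unit => simp [normalizeObj, _root_.FreeMonoidalCategory.flatten]
  | tensor X Y ihX ihY =>
      simp [normalizeObj, _root_.FreeMonoidalCategory.flatten, ihX, ihY, List.append_assoc]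

end CategoryTheory.FreeMonoidalCategory

/-- Two objects of the free monoidal category over `C` are connected by a
morphism (equivalently, are isomorphic) if and only if they have the same
normal form. -/
theorem free_monoidal_category_hom_nonempty_iff_flatten_eq (C : Type u)
    (X Y : FreeMonoidalCategory C) :
    Nonempty (X ⟶ Y) ↔ FreeMonoidalCategory.flatten X = FreeMonoidalCategory.flatten Y := by
  open CategoryTheory.FreeMonoidalCategory in
  constructor
  · rintro ⟨f⟩
    have h := Discrete.eq_of_hom ((fullNormalize C).map f)
    have h2 := congrArg nmoToList h
    simp only [fullNormalize, FreeMonoidalCategory.normalize, normalizeObj',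
      Discrete.functor_obj_eq_as, nmoToList_normalizeObj, List.nil_append] at h2
    exact h2
  · intro h
    have hn : (fullNormalize C).obj X = (fullNormalize C).obj Y := by
      apply Discrete.ext
      apply nmoToList_injective
      simp only [fullNormalize, FreeMonoidalCategory.normalize, normalizeObj',
        Discrete.functor_obj_eq_as, nmoToList_normalizeObj, List.nil_append]
      exact h
    exact ⟨(fullNormalizeIso C).hom.app X ≫
      eqToHom (congrArg (FreeMonoidalCategory.inclusion).obj hn) ≫
      (fullNormalizeIso C).inv.app Y⟩
end

section
/- Every morphism of the free monoidal category generated by a type C is an isomorphism; that is, the free monoidal category over a type is a groupoid. -/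
open CategoryTheory

/-- Every morphism in the free monoidal category generated by a type is an
isomorphism: the free monoidal category is a groupoid. -/
theorem free_monoidal_category_isIso (C : Type u)
    {X Y : FreeMonoidalCategory C} (f : X ⟶ Y) : IsIso f :=
  IsIso.of_groupoid f
end
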